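/- arXiv:1412.5098 — 3 statements merged into one kernel-verified Lean document; each statement's English description precedes it below -/
import Mathlib

section
/- Let $(V, f)$ be a finite-dimensional complex vector space with a nondegenerate symmetric bilinear form. Then the Clifford algebra $C(V, f)$, viewed as a superalgebra with its natural $\mathbb{Z}_2$-grading, is simple: it has no nontrivial $\mathbb{Z}_2$-graded two-sided ideals. -/
/-!
Over `ℂ` the form has an orthonormal basis `e₁, …, eₙ`; its images `gᵢ` in the Clifford algebra
square to `1`, anticommute, and their monomials span the algebra. A graded two-sided ideal `J` is
stable under the grade involution `α`, hence under the twisted conjugations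
`Uᵢ x = gᵢ · α(x) · gᵢ`, which act on a monomial by `(-1) ^ (number of occurrences of gᵢ)`. The
joint eigenprojections `∏ᵢ (1 ± Uᵢ) / 2` of these commuting involutions therefore preserve `J`,
sum to the identity, and each maps into the line spanned by a single monomial `g_T`. So a nonzero
`J` contains some `g_T`, which is invertible, and `J` is everything.
-/

open CliffordAlgebra

section AnticommutingGenerators

variable {A ι : Type*} [Ring A]

section Monomials

variable {g : ι → A}

theorem prod_map_mul_prod_map_reverse (hsq : ∀ i, g i * g i = 1) :
    ∀ l : List ι, (l.map g).prod * (l.reverse.map g).prod = 1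
  | [] => by simp
  | i :: t => by
    rw [List.reverse_cons, List.map_append, List.prod_append, List.map_cons, List.prod_cons,
      ← mul_assoc, mul_assoc (g i), prod_map_mul_prod_map_reverse hsq t]
    simp [hsq]

variable [DecidableEq ι] (hsq : ∀ i, g i * g i = 1)
  (hanti : ∀ i j, i ≠ j → g i * g j = -(g j * g i))
include hsq hanti

theorem exists_mul_prod_map_eq_units_smul_erase {i : ι} :
    ∀ {l : List ι}, i ∈ l →
      ∃ u : ℤˣ, g i * (l.map g).prod = u • ((l.erase i).map g).prod
  | [], h => absurd h List.not_mem_nil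
  | j :: t, h => by
    rcases eq_or_ne j i with rfl | hji
    · exact ⟨1, by simp [← mul_assoc, hsq]⟩
    · obtain ⟨u, hu⟩ := exists_mul_prod_map_eq_units_smul_erase
        ((List.mem_cons.mp h).resolve_left hji.symm)
      refine ⟨-u, ?_⟩
      rw [List.erase_cons_tail (by simpa using hji), List.map_cons, List.prod_cons,
        List.map_cons, List.prod_cons, ← mul_assoc, hanti i j hji.symm, neg_mul, mul_assoc, hu,
        mul_smul_comm, Units.neg_smul]

theorem exists_prod_map_eq_units_smul_one_of_even_count :
    ∀ l : List ι, (∀ i, Even (l.count i)) → ∃ u : ℤˣ, (l.map g).prod = u • 1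
  | [], _ => ⟨1, by simp⟩
  | i :: t, h => by
    have hodd : Odd (t.count i) := by simpa [Nat.even_add_one] using h i
    have hit : i ∈ t := List.count_pos_iff.mp hodd.pos
    obtain ⟨u, hu⟩ := exists_mul_prod_map_eq_units_smul_erase hsq hanti hit
    obtain ⟨v, hv⟩ := exists_prod_map_eq_units_smul_one_of_even_count (t.erase i) fun j => by
      rcases eq_or_ne j i with rfl | hji
      · rw [List.count_erase_self]; exact Nat.Odd.sub_odd hodd odd_one
      · simpa [List.count_erase_of_ne hji, List.count_cons, hji.symm] using h j
    exact ⟨u * v, by rw [List.map_cons, List.prod_cons, hu, hv, smul_smul]⟩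
termination_by l => l.length
decreasing_by exact List.length_erase_le.trans_lt (Nat.lt_succ_self _)

theorem exists_prod_map_eq_units_smul_of_odd_count_iff (l₁ l₂ : List ι)
    (h : ∀ i, Odd (l₁.count i) ↔ Odd (l₂.count i)) :
    ∃ u : ℤˣ, (l₁.map g).prod = u • (l₂.map g).prod := by
  obtain ⟨u, hu⟩ := exists_prod_map_eq_units_smul_one_of_even_count hsq hanti
    (l₁ ++ l₂.reverse) fun i => by
      rw [List.count_append, List.count_reverse, Nat.even_add', h]
  refine ⟨u, ?_⟩
  have hl₂ := prod_map_mul_prod_map_reverse hsq l₂.reverse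
  rw [List.reverse_reverse] at hl₂
  calc (l₁.map g).prod = (l₁.map g).prod * ((l₂.reverse.map g).prod * (l₂.map g).prod) := by
        rw [hl₂, mul_one]
    _ = u • (l₂.map g).prod := by
        rw [← mul_assoc, ← List.prod_append, ← List.map_append, hu, smul_mul_assoc, one_mul]

end Monomials

section TwistedConj

variable {K : Type*} [CommRing K] [Algebra K A] (σ : A →ₐ[K] A)

def twistedConj (a : A) : Module.End K A :=
  LinearMap.mulLeft K a ∘ₗ LinearMap.mulRight K a ∘ₗ σ.toLinearMap

theorem twistedConj_apply (a x : A) : twistedConj σ a x = a * (σ x * a) := rfl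

theorem twistedConj_mul {a : A} (ha : a * a = 1) (x y : A) :
    twistedConj σ a (x * y) = twistedConj σ a x * twistedConj σ a y := by
  simp only [twistedConj_apply, map_mul]
  calc a * (σ x * σ y * a) = a * (σ x * (a * a) * σ y * a) := by rw [ha, mul_one]
    _ = a * (σ x * a) * (a * (σ y * a)) := by simp only [mul_assoc]

variable [DecidableEq ι] {σ} {g : ι → A} (hsq : ∀ i, g i * g i = 1)
  (hanti : ∀ i j, i ≠ j → g i * g j = -(g j * g i)) (hσ : ∀ i, σ (g i) = -g i)
include hsq hanti hσ

theorem twistedConj_apply_generator (i j : ι) :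
    twistedConj σ (g i) (g j) = (-1 : K) ^ (if j = i then 1 else 0) • g j := by
  rw [twistedConj_apply, hσ, neg_mul, mul_neg]
  split_ifs with hji
  · subst hji; simp [hsq]
  · rw [← mul_assoc, hanti i j (Ne.symm hji), neg_mul, neg_neg, mul_assoc, hsq, mul_one,
      pow_zero, one_smul]

theorem twistedConj_prod_map (i : ι) :
    ∀ l : List ι, twistedConj σ (g i) (l.map g).prod = (-1 : K) ^ l.count i • (l.map g).prod
  | [] => by simp [twistedConj_apply, hsq]
  | j :: t => by
    rw [List.map_cons, List.prod_cons, twistedConj_mul σ (hsq i),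
      twistedConj_apply_generator hsq hanti hσ, twistedConj_prod_map i t, smul_mul_smul_comm,
      List.count_cons, ← pow_add, add_comm]
    simp only [beq_iff_eq]

end TwistedConj

theorem prod_map_apply_eq_ite {K M : Type*} [Semiring K] [AddCommMonoid M] [Module K M]
    (F : ι → Module.End K M) (p : ι → Prop) [DecidablePred p] {x : M}
    (hF : ∀ i, F i x = if p i then x else 0) :
    ∀ L : List ι, (L.map F).prod x = if ∀ i ∈ L, p i then x else 0
  | [] => by simp
  | i :: L => by
    rw [List.map_cons, List.prod_cons, Module.End.mul_apply, prod_map_apply_eq_ite F p hF L]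
    by_cases hL : ∀ i ∈ L, p i
    · rw [if_pos hL, hF]; simp only [List.forall_mem_cons, and_iff_left hL]
    · rw [if_neg hL, map_zero]; simp [hL]

section EigenProj

variable {K : Type*} [Field K] [Algebra K A] (σ : A →ₐ[K] A) (g : ι → A) [DecidableEq ι]

def eigenProj (T : Finset ι) (i : ι) : Module.End K A :=
  (2⁻¹ : K) • (1 + (if i ∈ T then -1 else 1 : K) • twistedConj σ (g i))

noncomputable def jointEigenProj [Fintype ι] (T : Finset ι) : Module.End K A :=
  (Finset.univ.toList.map (eigenProj σ g T)).prod

variable {σ g} [NeZero (2 : K)] (hsq : ∀ i, g i * g i = 1)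
  (hanti : ∀ i j, i ≠ j → g i * g j = -(g j * g i)) (hσ : ∀ i, σ (g i) = -g i)
include hsq hanti hσ

theorem eigenProj_prod_map (T : Finset ι) (i : ι) (l : List ι) :
    eigenProj σ g T i (l.map g).prod =
      if (i ∈ T ↔ Odd (l.count i)) then (l.map g).prod else 0 := by
  simp only [eigenProj, LinearMap.smul_apply, LinearMap.add_apply, Module.End.one_apply,
    twistedConj_prod_map hsq hanti hσ, smul_smul, ← Nat.not_even_iff_odd]
  rcases Nat.even_or_odd (l.count i) with hc | hc <;> by_cases hi : i ∈ T <;>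
    simp [hi, hc, hc.neg_one_pow, Nat.not_even_iff_odd.mpr, ← two_smul K, smul_smul,
      inv_mul_cancel₀ (two_ne_zero : (2 : K) ≠ 0)]

theorem jointEigenProj_prod_map [Fintype ι] (T : Finset ι) (l : List ι) :
    jointEigenProj σ g T (l.map g).prod =
      if T = Finset.univ.filter (fun i => Odd (l.count i)) then (l.map g).prod else 0 := by
  rw [jointEigenProj, prod_map_apply_eq_ite _ _ (eigenProj_prod_map hsq hanti hσ T · l)]
  simp [Finset.ext_iff]

end EigenProj

theorem span_range_prod_map_eq_top {R : Type*} [CommSemiring R] [Algebra R A] {g : ι → A}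
    (hgen : Algebra.adjoin R (Set.range g) = ⊤) :
    Submodule.span R (Set.range fun l : List ι => (l.map g).prod) = ⊤ := by
  have hmon :
      Set.range (fun l : List ι => (l.map g).prod) = Submonoid.closure (Set.range g) := by
    rw [← FreeMonoid.mrange_lift, MonoidHom.coe_mrange]
    exact congrArg Set.range (funext fun l => (FreeMonoid.lift_ofList g l).symm)
  rw [hmon, ← Algebra.adjoin_eq_span, hgen, Algebra.top_toSubmodule]

section GradedSimple

variable {K : Type*} [Field K] [Algebra K A] {σ : A →ₐ[K] A} {g : ι → A} [Fintype ι]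
  [DecidableEq ι]

theorem jointEigenProj_mem {J : Submodule K A} (hleft : ∀ a, ∀ x ∈ J, a * x ∈ J)
    (hright : ∀ a, ∀ x ∈ J, x * a ∈ J) (hσJ : ∀ x ∈ J, σ x ∈ J) (T : Finset ι) {x : A}
    (hx : x ∈ J) : jointEigenProj σ g T x ∈ J := by
  have hconj : ∀ i, ∀ y ∈ J, twistedConj σ (g i) y ∈ J := fun i y hy =>
    hleft _ _ (hright _ _ (hσJ y hy))
  have hproj : ∀ i, ∀ y ∈ J, eigenProj σ g T i y ∈ J := fun i y hy =>
    J.smul_mem _ (J.add_mem hy (J.smul_mem _ (hconj i y hy)))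
  refine List.prod_induction (fun F : Module.End K A => ∀ y ∈ J, F y ∈ J)
    (fun F G hF hG y hy => hF _ (hG y hy)) (fun y hy => hy) ?_ x hx
  simp only [List.mem_map]
  rintro _ ⟨i, -, rfl⟩
  exact hproj i

variable [NeZero (2 : K)] (hsq : ∀ i, g i * g i = 1)
  (hanti : ∀ i j, i ≠ j → g i * g j = -(g j * g i)) (hσ : ∀ i, σ (g i) = -g i)
  (hspan : Submodule.span K (Set.range fun l : List ι => (l.map g).prod) = ⊤)
include hsq hanti hσ hspan

theorem sum_jointEigenProj_apply (x : A) : ∑ T, jointEigenProj σ g T x = x := by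
  suffices ∑ T, jointEigenProj σ g T = 1 by simpa using LinearMap.congr_fun this x
  refine LinearMap.ext_on hspan ?_
  rintro _ ⟨l, rfl⟩
  simp [jointEigenProj_prod_map hsq hanti hσ]

theorem jointEigenProj_mem_span_singleton (T : Finset ι) (x : A) :
    jointEigenProj σ g T x ∈ K ∙ (T.toList.map g).prod := by
  suffices Submodule.span K (Set.range fun l : List ι => (l.map g).prod) ≤
      (K ∙ (T.toList.map g).prod).comap (jointEigenProj σ g T) by
    exact this (hspan ▸ Submodule.mem_top)
  refine Submodule.span_le.mpr ?_
  rintro _ ⟨l, rfl⟩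
  rw [SetLike.mem_coe, Submodule.mem_comap, jointEigenProj_prod_map hsq hanti hσ]
  split_ifs with hT
  · obtain ⟨u, hu⟩ := exists_prod_map_eq_units_smul_of_odd_count_iff hsq hanti l T.toList
      fun i => by
        rw [(Finset.nodup_toList T).count]
        by_cases hi : Odd (l.count i) <;> simp [hT, hi]
    rw [hu, Units.smul_def]
    exact zsmul_mem (Submodule.mem_span_singleton_self _) _
  · exact zero_mem _

theorem exists_prod_map_mem_of_ne_bot {J : Submodule K A} (hleft : ∀ a, ∀ x ∈ J, a * x ∈ J)
    (hright : ∀ a, ∀ x ∈ J, x * a ∈ J) (hσJ : ∀ x ∈ J, σ x ∈ J) (hJ : J ≠ ⊥) :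
    ∃ T : Finset ι, (T.toList.map g).prod ∈ J := by
  obtain ⟨x, hxJ, hx⟩ := J.exists_mem_ne_zero_of_ne_bot hJ
  obtain ⟨T, -, hT⟩ := Finset.exists_ne_zero_of_sum_ne_zero
    ((sum_jointEigenProj_apply hsq hanti hσ hspan x).symm ▸ hx)
  obtain ⟨c, hc⟩ := Submodule.mem_span_singleton.mp
    (jointEigenProj_mem_span_singleton hsq hanti hσ hspan T x)
  have hc0 : c ≠ 0 := by rintro rfl; exact hT (by rw [← hc, zero_smul])
  refine ⟨T, (J.smul_mem_iff hc0).mp ?_⟩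
  rw [hc]
  exact jointEigenProj_mem hleft hright hσJ T hxJ

end GradedSimple

theorem eq_bot_or_eq_top_of_anticommuting_generators {K : Type*} [Field K] [NeZero (2 : K)]
    [Algebra K A] [Fintype ι] [DecidableEq ι] {σ : A →ₐ[K] A} {g : ι → A}
    (hsq : ∀ i, g i * g i = 1) (hanti : ∀ i j, i ≠ j → g i * g j = -(g j * g i))
    (hσ : ∀ i, σ (g i) = -g i) (hgen : Algebra.adjoin K (Set.range g) = ⊤) {J : Submodule K A}
    (hleft : ∀ a, ∀ x ∈ J, a * x ∈ J) (hright : ∀ a, ∀ x ∈ J, x * a ∈ J)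
    (hσJ : ∀ x ∈ J, σ x ∈ J) : J = ⊥ ∨ J = ⊤ := by
  refine or_iff_not_imp_left.mpr fun hJ => ?_
  obtain ⟨T, hT⟩ := exists_prod_map_mem_of_ne_bot hsq hanti hσ
    (span_range_prod_map_eq_top hgen) hleft hright hσJ hJ
  have hone : (1 : A) ∈ J := prod_map_mul_prod_map_reverse hsq T.toList ▸ hright _ _ hT
  exact Submodule.eq_top_iff'.mpr fun z => mul_one z ▸ hleft z 1 hone

end AnticommutingGenerators

theorem LinearMap.BilinForm.exists_basis_apply_eq_ite {K V : Type*} [Field K] [IsAlgClosed K]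
    [Invertible (2 : K)] [AddCommGroup V] [Module K V] [FiniteDimensional K V]
    {f : LinearMap.BilinForm K V} (hsymm : f.IsSymm) (hnd : f.Nondegenerate) :
    ∃ b : Module.Basis (Fin (Module.finrank K V)) K V,
      ∀ i j, f (b i) (b j) = if i = j then 1 else 0 := by
  obtain ⟨b, hb⟩ := exists_orthogonal_basis (isSymm_iff.mp hsymm)
  have hbb := iIsOrtho.not_isOrtho_basis_self_of_nondegenerate hb hnd
  choose c hc using fun i => IsAlgClosed.exists_eq_mul_self (f (b i) (b i))⁻¹
  have hc0 : ∀ i, c i ≠ 0 := fun i h => inv_ne_zero (hbb i) (by simpa [h] using hc i)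
  refine ⟨b.unitsSMul fun i => Units.mk0 (c i) (hc0 i), fun i j => ?_⟩
  simp only [Module.Basis.unitsSMul_apply, Units.smul_mk0, map_smul, LinearMap.smul_apply,
    smul_eq_mul]
  split_ifs with hij
  · subst hij
    rw [← mul_assoc, ← hc, inv_mul_cancel₀ (hbb i)]
  · rw [hb hij, mul_zero, mul_zero]

theorem CliffordAlgebra.involute_mem_of_forall_decompose_mem {R M : Type*} [CommRing R]
    [AddCommGroup M] [Module R M] {Q : QuadraticForm R M} {J : Submodule R (CliffordAlgebra Q)}
    (hJ : ∀ x ∈ J, ∀ i, (DirectSum.decompose (evenOdd Q) x i : CliffordAlgebra Q) ∈ J)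
    {x : CliffordAlgebra Q} (hx : x ∈ J) : involute x ∈ J := by
  have hsum : ∑ i, (DirectSum.decompose (evenOdd Q) x i : CliffordAlgebra Q) = x := by
    simpa using congrArg (DirectSum.decompose (evenOdd Q)).symm
      (DirectSum.sum_univ_of (DirectSum.decompose (evenOdd Q) x))
  rw [← hsum, map_sum]
  refine J.sum_mem fun i _ => ?_
  fin_cases i
  · rw [involute_eq_of_mem_even (SetLike.coe_mem _)]
    exact hJ x hx 0
  · rw [involute_eq_of_mem_odd (SetLike.coe_mem _)]
    exact J.neg_mem (hJ x hx 1)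

theorem CliffordAlgebra.adjoin_range_ι_basis {R M ι : Type*} [CommRing R] [AddCommGroup M]
    [Module R M] {Q : QuadraticForm R M} (b : Module.Basis ι R M) :
    Algebra.adjoin R (Set.range fun i => CliffordAlgebra.ι Q (b i)) = ⊤ := by
  set S := Algebra.adjoin R (Set.range fun i => CliffordAlgebra.ι Q (b i))
  rw [eq_top_iff, ← adjoin_range_ι, Algebra.adjoin_le_iff]
  rintro _ ⟨v, rfl⟩
  have : Submodule.span R (Set.range b) ≤ (Subalgebra.toSubmodule S).comap (CliffordAlgebra.ι Q) :=
    Submodule.span_le.mpr (by rintro _ ⟨i, rfl⟩; exact Algebra.subset_adjoin ⟨i, rfl⟩)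
  exact this (b.span_eq ▸ Submodule.mem_top)

/-- Let `(V, f)` be a finite-dimensional complex vector space equipped with a
nondegenerate symmetric bilinear form.  Then the Clifford algebra `C(V, f)`
(of the quadratic form `x ↦ f(x,x)`), endowed with its natural `ℤ₂`-grading
`CliffordAlgebra.evenOdd`, is a simple superalgebra: every `ℤ₂`-graded two-sided
ideal is trivial. -/
theorem cliffordAlgebra_graded_simple
    (V : Type*) [AddCommGroup V] [Module ℂ V] [FiniteDimensional ℂ V]
    (f : LinearMap.BilinForm ℂ V) (hsymm : f.IsSymm) (hnd : f.Nondegenerate)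
    (J : Submodule ℂ (CliffordAlgebra f.toQuadraticMap))
    (hleft : ∀ a : CliffordAlgebra f.toQuadraticMap, ∀ x ∈ J, a * x ∈ J)
    (hright : ∀ a : CliffordAlgebra f.toQuadraticMap, ∀ x ∈ J, x * a ∈ J)
    (hgraded : ∀ x ∈ J, ∀ i : ZMod 2,
      (DirectSum.decompose (CliffordAlgebra.evenOdd f.toQuadraticMap) x i :
        CliffordAlgebra f.toQuadraticMap) ∈ J) :
    J = ⊥ ∨ J = ⊤ := by
  obtain ⟨b, hb⟩ := LinearMap.BilinForm.exists_basis_apply_eq_ite hsymm hnd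
  have hortho : ∀ i j, i ≠ j → f.toQuadraticMap.IsOrtho (b i) (b j) := fun i j hij =>
    (LinearMap.BilinForm.toQuadraticMap_isOrtho (LinearMap.BilinForm.isSymm_iff.mp hsymm)).mpr
      (by rw [hb, if_neg hij])
  refine eq_bot_or_eq_top_of_anticommuting_generators (σ := involute)
    (g := fun i => CliffordAlgebra.ι _ (b i)) (fun i => ?_)
    (fun i j hij => ι_mul_ι_comm_of_isOrtho (hortho i j hij))
    (fun i => involute_ι _) (adjoin_range_ι_basis b) hleft hright
    (fun x => involute_mem_of_forall_decompose_mem hgraded)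
  rw [ι_sq_scalar, LinearMap.BilinMap.toQuadraticMap_apply, hb, if_pos rfl, map_one]
end

section
/- Let $V$ be an irreducible finite-dimensional module over the Lie superalgebra $\mathfrak{h} \otimes A$, where $\mathfrak{h}$ is the standard Cartan subalgebra of $\mathfrak{q}(n)$, $n \geq 2$, and $A$ a commutative unital $\mathbb{C}$-algebra. If $I \subseteq A$ is an ideal with $(\mathfrak{h}_{\bar 0} \otimes I)V = 0$, then also $(\mathfrak{h}_{\bar 1} \otimes I)V = 0$. -/
/-!
For `x ∈ 𝔥₁ ⊗ I` and odd `y ∈ 𝔥 ⊗ A` the bracket `[x, y]` lies in `𝔥₀ ⊗ I`, hence acts by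
zero, while `[𝔥₀ ⊗ A, x] = 0` because diagonal matrices commute. So `ρ(x)` supercommutes with
the whole action and with the parity, which makes `ker ρ(x)` a graded submodule, and
`2 ρ(x)² = ρ([x, x]) = 0`. By irreducibility `ker ρ(x)` is `0` or `V`; since `ρ(x)` maps `V`
into its own kernel, both cases force `ρ(x) = 0`.
-/


open Matrix

noncomputable section

variable (n : ℕ) (A : Type*) [CommRing A] [Algebra ℂ A]

/-- Square matrices of size `n+1` with entries in the commutative `ℂ`-algebra `A`. -/
abbrev QMat := Matrix (Fin (n + 1)) (Fin (n + 1)) A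

/-- The ambient space of pairs `(X, Y)` of matrices over `A`; a pair represents the
element of `𝔮(n) ⊗ A` with even component `X` and odd component `Y` (using the
identification of `𝔮(n) ⊗ A` with pairs of traceless `(n+1) × (n+1)` matrices over
`A`, where `(X, Y)` corresponds to the class of `[[X, Y], [Y, X]]`). -/
abbrev QPair := QMat n A × QMat n A

/-- `𝔮(n) ⊗ A`, realized as the space of pairs of traceless matrices over `A`. -/
def qA : Submodule ℂ (QPair n A) where
  carrier := {p | p.1.trace = 0 ∧ p.2.trace = 0}
  add_mem' := by
    intro p q hp hq
    exact ⟨by simp [hp.1, hq.1], by simp [hp.2, hq.2]⟩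
  zero_mem' := by simp
  smul_mem' := by
    intro c p hp
    exact ⟨by simp [hp.1], by simp [hp.2]⟩

/-- The Lie superbracket of `𝔮(n) ⊗ A` in the matrix-pair model: on even components it
is the commutator plus the anticommutator of the odd components (projected back to
traceless matrices), and on odd components it is given by the mixed commutators. -/
def qbr (p q : QPair n A) : QPair n A :=
  (p.1 * q.1 - q.1 * p.1 + p.2 * q.2 + q.2 * p.2 -
      (((n : ℂ) + 1)⁻¹ • (p.2 * q.2 + q.2 * p.2).trace) • (1 : QMat n A),
    p.1 * q.2 - q.2 * p.1 + p.2 * q.1 - q.1 * p.2)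

lemma qbr_mem (p q : QPair n A) : qbr n A p q ∈ qA n A := by
  have h1 : ((((n : ℂ) + 1)⁻¹ • (p.2 * q.2 + q.2 * p.2).trace) •
      (1 : QMat n A)).trace = (p.2 * q.2 + q.2 * p.2).trace := by
    rw [Matrix.trace_smul, Matrix.trace_one, smul_eq_mul, smul_mul_assoc]
    rw [show ((Fintype.card (Fin (n + 1)) : A)) = ((n + 1 : ℕ) : A) by simp]
    rw [← nsmul_eq_mul', ← Nat.cast_smul_eq_nsmul ℂ, smul_smul]
    rw [show (((n + 1 : ℕ) : ℂ)) = (n : ℂ) + 1 by push_cast; ring]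
    rw [inv_mul_cancel₀ (by
      exact_mod_cast Nat.cast_add_one_ne_zero (R := ℂ) n), one_smul]
  constructor
  · show (p.1 * q.1 - q.1 * p.1 + p.2 * q.2 + q.2 * p.2 -
      (((n : ℂ) + 1)⁻¹ • (p.2 * q.2 + q.2 * p.2).trace) • (1 : QMat n A)).trace = 0
    rw [Matrix.trace_sub, h1, Matrix.trace_add, Matrix.trace_add, Matrix.trace_sub,
      Matrix.trace_add, Matrix.trace_mul_comm p.1 q.1]
    ring
  · show (p.1 * q.2 - q.2 * p.1 + p.2 * q.1 - q.1 * p.2).trace = 0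
    rw [Matrix.trace_sub, Matrix.trace_add, Matrix.trace_sub,
      Matrix.trace_mul_comm p.1 q.2, Matrix.trace_mul_comm p.2 q.1]
    ring

/-- An element of the matrix-pair model is even if its odd component vanishes. -/
def IsEvenElt (p : QPair n A) : Prop := p.2 = 0

/-- An element of the matrix-pair model is odd if its even component vanishes. -/
def IsOddElt (p : QPair n A) : Prop := p.1 = 0

/-- Membership in `𝔥₀ ⊗ A`: even, with diagonal matrix component. -/
def InH0 (p : QPair n A) : Prop := p.2 = 0 ∧ p.1.IsDiag

/-- Membership in `𝔥₁ ⊗ A`: odd, with diagonal matrix component. -/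
def InH1 (p : QPair n A) : Prop := p.1 = 0 ∧ p.2.IsDiag

/-- Membership in `𝔥 ⊗ A`: both components diagonal. -/
def InH (p : QPair n A) : Prop := p.1.IsDiag ∧ p.2.IsDiag

/-- Membership in `𝔫⁺ ⊗ A`: both components strictly upper triangular. -/
def InNplus (p : QPair n A) : Prop :=
  ∀ i j : Fin (n + 1), j ≤ i → p.1 i j = 0 ∧ p.2 i j = 0

/-- Membership in `𝔮(n) ⊗ I` for an ideal `I ⊆ A`: all entries lie in `I`. -/
def EntriesIn (I : Ideal A) (p : QPair n A) : Prop :=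
  ∀ i j : Fin (n + 1), p.1 i j ∈ I ∧ p.2 i j ∈ I

/-- `𝔥₀ ⊗ A` as a subspace of the matrix-pair model of `𝔮(n) ⊗ A`: even diagonal
traceless pairs. -/
def h0A : Submodule ℂ (QPair n A) where
  carrier := {p | p.2 = 0 ∧ p.1.IsDiag ∧ p.1.trace = 0}
  add_mem' := by
    intro p q hp hq
    exact ⟨by simp [hp.1, hq.1], hp.2.1.add hq.2.1, by simp [hp.2.2, hq.2.2]⟩
  zero_mem' := ⟨rfl, Matrix.isDiag_zero, by simp⟩
  smul_mem' := by
    intro c p hp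
    exact ⟨by simp [hp.1], hp.2.1.smul c, by simp [hp.2.2]⟩

lemma h0A_le_qA : h0A n A ≤ qA n A := by
  intro p hp
  exact ⟨hp.2.2, by simp [hp.1]⟩

/-- The raw data of an action of `𝔮(n) ⊗ A` on a `ℤ₂`-graded vector space `M`: an
action map and the parity involution `P` of `M`. -/
structure QAct (M : Type*) [AddCommGroup M] [Module ℂ M] where
  act : ↥(qA n A) →ₗ[ℂ] M →ₗ[ℂ] M
  P : M →ₗ[ℂ] M

variable {M : Type*} [AddCommGroup M] [Module ℂ M]

/-- The data `ρ` is a representation of the Lie superalgebra `𝔮(n) ⊗ A`: `P` is an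
involution, commuting (resp. anticommuting) with the action of even (resp. odd)
elements, and the bracket acts by the supercommutator. -/
def QAct.IsRep (ρ : QAct n A M) : Prop :=
  (ρ.P ∘ₗ ρ.P = LinearMap.id) ∧
  (∀ x : ↥(qA n A), IsEvenElt n A ↑x → ρ.P ∘ₗ ρ.act x = ρ.act x ∘ₗ ρ.P) ∧
  (∀ x : ↥(qA n A), IsOddElt n A ↑x → ρ.P ∘ₗ ρ.act x = -(ρ.act x ∘ₗ ρ.P)) ∧
  (∀ x y : ↥(qA n A), (IsEvenElt n A ↑x ∨ IsEvenElt n A ↑y) →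
    ρ.act ⟨qbr n A ↑x ↑y, qbr_mem n A _ _⟩ = ρ.act x ∘ₗ ρ.act y - ρ.act y ∘ₗ ρ.act x) ∧
  (∀ x y : ↥(qA n A), IsOddElt n A ↑x → IsOddElt n A ↑y →
    ρ.act ⟨qbr n A ↑x ↑y, qbr_mem n A _ _⟩ = ρ.act x ∘ₗ ρ.act y + ρ.act y ∘ₗ ρ.act x)

/-- A graded submodule: stable under the action and under the parity involution. -/
def QAct.Invt (ρ : QAct n A M) (N : Submodule ℂ M) : Prop :=
  (∀ x : ↥(qA n A), ∀ m ∈ N, ρ.act x m ∈ N) ∧ ∀ m ∈ N, ρ.P m ∈ N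

/-- Irreducibility: `M ≠ 0` and the only graded invariant subspaces are `0`, `M`. -/
def QAct.Irred (ρ : QAct n A M) : Prop :=
  Nontrivial M ∧ ∀ N : Submodule ℂ M, QAct.Invt n A ρ N → N = ⊥ ∨ N = ⊤

/-- The `U(𝔮(n) ⊗ A)`-submodule of `M` generated by `v`: the smallest subspace
containing `v` and stable under the action. -/
def QAct.gen (ρ : QAct n A M) (v : M) : Submodule ℂ M :=
  sInf {N | v ∈ N ∧ ∀ x : ↥(qA n A), ∀ m ∈ N, ρ.act x m ∈ N}

/-- `v` is a highest weight vector of `ρ` with highest weight `ψ : 𝔥₀ ⊗ A → ℂ`: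
`v ≠ 0`, `v` generates `M` (i.e. `U(𝔮 ⊗ A)v = M`), `(𝔫⁺ ⊗ A)v = 0` and every element
of `𝔥₀ ⊗ A` acts on `v` by the scalar given by `ψ` (i.e. `U(𝔥₀ ⊗ A)v = ℂv`). -/
def QAct.IsHWVector (ρ : QAct n A M) (ψ : ↥(h0A n A) →ₗ[ℂ] ℂ) (v : M) : Prop :=
  v ≠ 0 ∧ QAct.gen n A ρ v = ⊤ ∧
  (∀ x : ↥(qA n A), InNplus n A ↑x → ρ.act x v = 0) ∧
  (∀ (p : QPair n A) (hp : p ∈ h0A n A),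
    ρ.act ⟨p, h0A_le_qA n A hp⟩ v = ψ ⟨p, hp⟩ • v)

/-- `ψ ∈ 𝓛(𝔥 ⊗ A)`: a functional on `𝔥₀ ⊗ A` vanishing on `𝔥₀ ⊗ I` for some
finite-codimensional ideal `I ⊆ A`. -/
def LFun (ψ : ↥(h0A n A) →ₗ[ℂ] ℂ) : Prop :=
  ∃ I : Ideal A, FiniteDimensional ℂ (A ⧸ I) ∧
    ∀ x : ↥(h0A n A), EntriesIn n A I ↑x → ψ x = 0

lemma IsDiag.mul_isDiag {X Y : QMat n A} (hX : X.IsDiag) (hY : Y.IsDiag) :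
    (X * Y).IsDiag := by
  intro i j hij
  rw [Matrix.mul_apply]
  apply Finset.sum_eq_zero
  intro k _
  by_cases hk : k = i
  · subst hk
    rw [hY hij, mul_zero]
  · rw [hX (Ne.symm hk), zero_mul]

/-- `𝔥 ⊗ A`, the Cartan subalgebra of `𝔮(n) ⊗ A` in the matrix-pair model: pairs of
traceless diagonal matrices over `A`. -/
def hA : Submodule ℂ (QPair n A) where
  carrier := {p | p.1.IsDiag ∧ p.2.IsDiag ∧ p.1.trace = 0 ∧ p.2.trace = 0}
  add_mem' := by
    intro p q hp hq
    exact ⟨hp.1.add hq.1, hp.2.1.add hq.2.1, by simp [hp.2.2.1, hq.2.2.1],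
      by simp [hp.2.2.2, hq.2.2.2]⟩
  zero_mem' := ⟨Matrix.isDiag_zero, Matrix.isDiag_zero, by simp, by simp⟩
  smul_mem' := by
    intro c p hp
    exact ⟨hp.1.smul c, hp.2.1.smul c, by simp [hp.2.2.1], by simp [hp.2.2.2]⟩

lemma hA_le_qA : hA n A ≤ qA n A := fun p hp => ⟨hp.2.2.1, hp.2.2.2⟩

lemma hbr_mem {p q : QPair n A} (hp : p ∈ hA n A) (hq : q ∈ hA n A) :
    qbr n A p q ∈ hA n A := by
  have h := qbr_mem n A p q
  obtain ⟨hp1, hp2, -, -⟩ := hp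
  obtain ⟨hq1, hq2, -, -⟩ := hq
  refine ⟨?_, ?_, h.1, h.2⟩
  · exact ((((IsDiag.mul_isDiag n A hp1 hq1).sub
      (IsDiag.mul_isDiag n A hq1 hp1)).add
      (IsDiag.mul_isDiag n A hp2 hq2)).add
      (IsDiag.mul_isDiag n A hq2 hp2)).sub (Matrix.isDiag_one.smul _)
  · exact (((IsDiag.mul_isDiag n A hp1 hq2).sub
      (IsDiag.mul_isDiag n A hq2 hp1)).add
      (IsDiag.mul_isDiag n A hp2 hq1)).sub (IsDiag.mul_isDiag n A hq1 hp2)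

lemma h0A_le_hA : h0A n A ≤ hA n A := by
  intro p hp
  exact ⟨hp.2.1, by simp [hp.1], hp.2.2, by simp [hp.1]⟩

/-- The raw data of an action of the Cartan subalgebra `𝔥 ⊗ A` on a `ℤ₂`-graded
vector space `M`: an action map and the parity involution of `M`. -/
structure HAct (M : Type*) [AddCommGroup M] [Module ℂ M] where
  act : ↥(hA n A) →ₗ[ℂ] M →ₗ[ℂ] M
  P : M →ₗ[ℂ] M

variable {M : Type*} [AddCommGroup M] [Module ℂ M]

/-- The data `ρ` is a representation of the Lie superalgebra `𝔥 ⊗ A`. -/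
def HAct.IsRep (ρ : HAct n A M) : Prop :=
  (ρ.P ∘ₗ ρ.P = LinearMap.id) ∧
  (∀ x : ↥(hA n A), IsEvenElt n A ↑x → ρ.P ∘ₗ ρ.act x = ρ.act x ∘ₗ ρ.P) ∧
  (∀ x : ↥(hA n A), IsOddElt n A ↑x → ρ.P ∘ₗ ρ.act x = -(ρ.act x ∘ₗ ρ.P)) ∧
  (∀ x y : ↥(hA n A), (IsEvenElt n A ↑x ∨ IsEvenElt n A ↑y) →
    ρ.act ⟨qbr n A ↑x ↑y, hbr_mem n A x.2 y.2⟩ = ρ.act x ∘ₗ ρ.act y - ρ.act y ∘ₗ ρ.act x) ∧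
  (∀ x y : ↥(hA n A), IsOddElt n A ↑x → IsOddElt n A ↑y →
    ρ.act ⟨qbr n A ↑x ↑y, hbr_mem n A x.2 y.2⟩ = ρ.act x ∘ₗ ρ.act y + ρ.act y ∘ₗ ρ.act x)

/-- A graded subspace of an `𝔥 ⊗ A`-module, stable under the action and parity. -/
def HAct.Invt (ρ : HAct n A M) (N : Submodule ℂ M) : Prop :=
  (∀ x : ↥(hA n A), ∀ m ∈ N, ρ.act x m ∈ N) ∧ ∀ m ∈ N, ρ.P m ∈ N

/-- Irreducibility of an `𝔥 ⊗ A`-module. -/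
def HAct.Irred (ρ : HAct n A M) : Prop :=
  Nontrivial M ∧ ∀ N : Submodule ℂ M, HAct.Invt n A ρ N → N = ⊥ ∨ N = ⊤

instance Ideal.isTwoSided_matrix {R : Type*} [CommSemiring R] (ι : Type*) [Fintype ι]
    [DecidableEq ι] (I : Ideal R) : (I.matrix ι).IsTwoSided where
  mul_mem_of_left N hM i j := by
    rw [mul_apply]
    exact I.sum_mem fun k _ => I.mul_mem_right _ (hM i k)

section IdealMatrix

variable {R ι : Type*} [CommSemiring R] [Fintype ι] [DecidableEq ι] {I : Ideal R}

theorem Ideal.trace_mem_of_mem_matrix {X : Matrix ι ι R} (hX : X ∈ I.matrix ι) :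
    X.trace ∈ I :=
  I.sum_mem fun i _ => hX i i

theorem Ideal.smul_one_mem_matrix {a : R} (ha : a ∈ I) : a • (1 : Matrix ι ι R) ∈ I.matrix ι :=
  fun i j => by
    rw [Matrix.smul_apply, smul_eq_mul]
    exact I.mul_mem_right _ ha

end IdealMatrix

theorem Matrix.IsDiag.commute {R ι : Type*} [CommSemiring R] [Fintype ι] [DecidableEq ι]
    {X Y : Matrix ι ι R} (hX : X.IsDiag) (hY : Y.IsDiag) : Commute X Y := by
  rw [← hX.diagonal_diag, ← hY.diagonal_diag]
  exact commute_diagonal _ _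

theorem LinearMap.ker_le_comap_ker_of_comp_eq {R M : Type*} [Semiring R] [AddCommMonoid M]
    [Module R M] {f g g' : M →ₗ[R] M} (h : f ∘ₗ g = g' ∘ₗ f) : ker f ≤ (ker f).comap g := by
  intro m hm
  rw [Submodule.mem_comap, mem_ker, ← comp_apply, h, comp_apply, mem_ker.mp hm, map_zero]

lemma entriesIn_qbr_left (I : Ideal A) {p : QPair n A} (q : QPair n A)
    (hp : EntriesIn n A I p) : EntriesIn n A I (qbr n A p q) := by
  simp only [EntriesIn, forall_and, ← Ideal.mem_matrix] at hp ⊢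
  obtain ⟨h1, h2⟩ := hp
  have htrace : (p.2 * q.2 + q.2 * p.2).trace ∈ I := Ideal.trace_mem_of_mem_matrix <|
    add_mem (Ideal.mul_mem_right _ _ h2) (Ideal.mul_mem_left _ _ h2)
  have hscalar := Ideal.smul_one_mem_matrix (ι := Fin (n + 1))
    (Submodule.smul_of_tower_mem I ((n : ℂ) + 1)⁻¹ htrace)
  exact ⟨sub_mem (add_mem (add_mem (sub_mem (Ideal.mul_mem_right _ _ h1)
      (Ideal.mul_mem_left _ _ h1)) (Ideal.mul_mem_right _ _ h2)) (Ideal.mul_mem_left _ _ h2))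
      hscalar,
    sub_mem (add_mem (sub_mem (Ideal.mul_mem_right _ _ h1) (Ideal.mul_mem_left _ _ h1))
      (Ideal.mul_mem_right _ _ h2)) (Ideal.mul_mem_left _ _ h2)⟩

lemma inH0_qbr_of_isOddElt {p q : QPair n A} (hp : p ∈ hA n A) (hq : q ∈ hA n A)
    (hpo : IsOddElt n A p) (hqo : IsOddElt n A q) : InH0 n A (qbr n A p q) := by
  unfold IsOddElt at hpo hqo
  exact ⟨by simp [qbr, hpo, hqo], (hbr_mem n A hp hq).1⟩

lemma qbr_eq_zero_of_isEvenElt_of_inH1 {p q : QPair n A} (hp : p.1.IsDiag)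
    (hpe : IsEvenElt n A p) (hq : InH1 n A q) : qbr n A p q = 0 := by
  unfold IsEvenElt at hpe
  obtain ⟨hq1, hq2⟩ := hq
  have hcomm : p.1 * q.2 = q.2 * p.1 := (hp.commute hq2).eq
  simp [qbr, hpe, hq1, hcomm]

lemma exists_isEvenElt_add_isOddElt (y : hA n A) :
    ∃ ye yo : hA n A, IsEvenElt n A ye ∧ IsOddElt n A yo ∧ y = ye + yo := by
  obtain ⟨hy1, hy2, hy3, hy4⟩ := y.2
  exact ⟨⟨(y.1.1, 0), hy1, isDiag_zero, hy3, trace_zero _ _⟩,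
    ⟨(0, y.1.2), isDiag_zero, hy2, trace_zero _ _, hy4⟩, rfl, rfl,
    Subtype.ext (Prod.ext (add_zero _).symm (zero_add _).symm)⟩

namespace HAct

variable {n A} {ρ : HAct n A M}

lemma IsRep.comp_eq_neg_comp_of_inH1 (hrep : HAct.IsRep n A ρ) {I : Ideal A}
    (heven : ∀ x : hA n A, InH0 n A x → EntriesIn n A I x → ρ.act x = 0) {x y : hA n A}
    (hx : InH1 n A x) (hxI : EntriesIn n A I x) (hy : IsOddElt n A y) :
    ρ.act x ∘ₗ ρ.act y = -(ρ.act y ∘ₗ ρ.act x) := by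
  rw [eq_neg_iff_add_eq_zero, ← hrep.2.2.2.2 x y hx.1 hy]
  exact heven _ (inH0_qbr_of_isOddElt n A x.2 y.2 hx.1 hy) (entriesIn_qbr_left n A I _ hxI)

lemma IsRep.comp_eq_comp_of_inH1 (hrep : HAct.IsRep n A ρ) {x y : hA n A} (hx : InH1 n A x)
    (hy : IsEvenElt n A y) : ρ.act x ∘ₗ ρ.act y = ρ.act y ∘ₗ ρ.act x := by
  have hbr := hrep.2.2.2.1 y x (Or.inl hy)
  have hzero : (⟨qbr n A y x, hbr_mem n A y.2 x.2⟩ : hA n A) = 0 :=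
    Subtype.ext (qbr_eq_zero_of_isEvenElt_of_inH1 n A y.2.1 hy hx)
  rw [hzero, map_zero] at hbr
  exact (sub_eq_zero.mp hbr.symm).symm

lemma invt_ker_of_supercommute {f : M →ₗ[ℂ] M}
    (hcomm : ∀ y : hA n A, IsEvenElt n A y → f ∘ₗ ρ.act y = ρ.act y ∘ₗ f)
    (hanti : ∀ y : hA n A, IsOddElt n A y → f ∘ₗ ρ.act y = -(ρ.act y ∘ₗ f))
    (hP : ρ.P ∘ₗ f = -(f ∘ₗ ρ.P)) : HAct.Invt n A ρ (LinearMap.ker f) := by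
  refine ⟨fun y m hm => ?_, fun m hm => ?_⟩
  · obtain ⟨ye, yo, hye, hyo, rfl⟩ := exists_isEvenElt_add_isOddElt n A y
    rw [map_add, LinearMap.add_apply]
    exact add_mem (LinearMap.ker_le_comap_ker_of_comp_eq (hcomm ye hye) hm)
      (LinearMap.ker_le_comap_ker_of_comp_eq
        ((hanti yo hyo).trans (LinearMap.neg_comp _ _).symm) hm)
  · exact LinearMap.ker_le_comap_ker_of_comp_eq (g' := -ρ.P)
      (by rw [LinearMap.neg_comp, hP, neg_neg]) hm

lemma Irred.eq_zero_of_comp_self_eq_zero (hirr : HAct.Irred n A ρ) {f : M →ₗ[ℂ] M}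
    (hf : f ∘ₗ f = 0) (hker : HAct.Invt n A ρ (LinearMap.ker f)) : f = 0 := by
  rcases hirr.2 _ hker with hbot | htop
  · ext m
    have hfm : f m ∈ LinearMap.ker f := LinearMap.congr_fun hf m
    rwa [hbot, Submodule.mem_bot] at hfm
  · exact LinearMap.ker_eq_top.mp htop

end HAct

theorem odd_ideal_annihilates_of_even (ρ : HAct n A M)
    (hrep : HAct.IsRep n A ρ) (hirr : HAct.Irred n A ρ)
    (I : Ideal A)
    (heven : ∀ x : ↥(hA n A), InH0 n A ↑x → EntriesIn n A I ↑x → ρ.act x = 0) :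
    ∀ x : ↥(hA n A), InH1 n A ↑x → EntriesIn n A I ↑x → ρ.act x = 0 := by
  intro x hx hxI
  have hanti : ∀ y : hA n A, IsOddElt n A y → ρ.act x ∘ₗ ρ.act y = -(ρ.act y ∘ₗ ρ.act x) :=
    fun y hy => hrep.comp_eq_neg_comp_of_inH1 heven hx hxI hy
  have hsq : ρ.act x ∘ₗ ρ.act x = 0 := by
    have hdouble := hanti x hx.1
    rw [eq_neg_iff_add_eq_zero, ← two_smul ℂ] at hdouble
    exact (smul_eq_zero.mp hdouble).resolve_left two_ne_zero
  exact hirr.eq_zero_of_comp_self_eq_zero hsq <| HAct.invt_ker_of_supercommute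
    (fun y hy => hrep.comp_eq_comp_of_inH1 hx hy) hanti (hrep.2.2.1 x hx.1)
end
end

section
/- Every irreducible finite-dimensional module $V$ over $\mathfrak{q}(n) \otimes A$ ($n \geq 2$, $A$ a commutative unital $\mathbb{C}$-algebra) is a highest weight module: there is a nonzero $v \in V$ with $U(\mathfrak{q} \otimes A)v = V$, $(\mathfrak{n}^+ \otimes A)v = 0$, and $U(\mathfrak{h}_{\bar 0} \otimes A)v = \mathbb{C}v$. Moreover, the highest weight space is an irreducible $\mathfrak{h} \otimes A$-module. -/
open Matrix

noncomputable section

variable (n : ℕ) (A : Type*) [CommRing A] [Algebra ℂ A]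

variable {M : Type*} [AddCommGroup M] [Module ℂ M]

/-- The `ψ`-weight space `{w ∈ M | x w = ψ(x) w for all x ∈ 𝔥₀ ⊗ A}`. -/
def hwSpace (ρ : QAct n A M) (ψ : ↥(h0A n A) →ₗ[ℂ] ℂ) : Submodule ℂ M where
  carrier := {w | ∀ (p : QPair n A) (hp : p ∈ h0A n A),
    ρ.act ⟨p, h0A_le_qA n A hp⟩ w = ψ ⟨p, hp⟩ • w}
  add_mem' := by
    intro a b ha hb p hp
    simp [map_add, ha p hp, hb p hp, smul_add]
  zero_mem' := by intro p hp; simp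
  smul_mem' := by
    intro c a ha p hp
    rw [LinearMap.map_smul, ha p hp, smul_comm]

/-! Let `H` be the action of the regular element `diag(n/2, n/2 - 1, …, -n/2)` of `𝔥₀`; the
root vector at position `(i, j)` raises generalized `H`-eigenvalues by `j - i`. Take an eigenvalue
`λ` of `H` of maximal real part. Then `𝔫⁺ ⊗ A` kills the generalized `λ`-eigenspace, and the
commuting operators of `𝔥₀ ⊗ A` have a common eigenvector in the `λ`-eigenspace; this gives the
weight `ψ`, and a parity-homogeneous vector of the `ψ`-weight space generates `V` by
irreducibility. If `N` is a nonzero graded `𝔥 ⊗ A`-submodule of the weight space, then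
`U(𝔫⁻ ⊗ A) N` is `𝔮 ⊗ A`-stable, hence all of `V`; since `𝔫⁻ ⊗ A` maps everything off the
generalized `λ`-eigenspace, `V = N ⊕ (other generalized eigenspaces)`, which forces `N` to be the
whole weight space. -/

namespace Module.End

variable {V : Type*} [AddCommGroup V] [Module ℂ V]

lemma exists_hasEigenvalue_maxGenEigenspace_eq_bot_of_re_lt [FiniteDimensional ℂ V]
    [Nontrivial V] (f : End ℂ V) :
    ∃ lam : ℂ, f.HasEigenvalue lam ∧ ∀ μ : ℂ, lam.re < μ.re → f.maxGenEigenspace μ = ⊥ := by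
  obtain ⟨lam, hlam, hmax⟩ := Set.Finite.exists_maximalFor Complex.re _ f.finite_hasEigenvalue
    ⟨_, (exists_eigenvalue f).choose_spec⟩
  refine ⟨lam, hlam, fun μ hμ => by_contra fun hne => hμ.not_ge (hmax ?_ hμ.le)⟩
  exact (hasUnifEigenvalue_iff_hasUnifEigenvalue_one (k := ⊤) (by simp)).mp hne

lemma apply_mem_maxGenEigenspace_add {R M : Type*} [CommRing R] [AddCommGroup M] [Module R M]
    {f g : End R M} {c : R} (hfg : f * g - g * f = c • g) {μ : R} {m : M}
    (hm : m ∈ f.maxGenEigenspace μ) : g m ∈ f.maxGenEigenspace (μ + c) := by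
  have hsemi : SemiconjBy g (f - μ • 1) (f - (μ + c) • 1) := by
    rw [SemiconjBy, mul_sub, sub_mul, mul_smul_comm, smul_mul_assoc, mul_one, one_mul, add_smul,
      ← hfg]
    abel
  rw [mem_maxGenEigenspace] at hm ⊢
  obtain ⟨k, hk⟩ := hm
  refine ⟨k, ?_⟩
  rw [← mul_apply, ← (hsemi.pow_right k).eq, mul_apply, hk, map_zero]

lemma exists_mem_ne_zero_forall_eq_smul_of_commute [FiniteDimensional ℂ V] {ι : Type*}
    (f : ι → End ℂ V) (hcomm : ∀ i j, Commute (f i) (f j)) (U : Submodule ℂ V)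
    (hU : U ≠ ⊥) (hfU : ∀ i, ∀ u ∈ U, f i u ∈ U) :
    ∃ v ∈ U, v ≠ 0 ∧ ∀ i, ∃ c : ℂ, f i v = c • v := by
  induction hd : finrank ℂ U using Nat.strong_induction_on generalizing U with
  | _ d ih =>
  by_cases hsplit : ∃ i μ, U ⊓ (f i).eigenspace μ ≠ ⊥ ∧ U ⊓ (f i).eigenspace μ ≠ U
  · obtain ⟨i, μ, hne, hlt⟩ := hsplit
    have hstable : ∀ j, ∀ u ∈ U ⊓ (f i).eigenspace μ, f j u ∈ U ⊓ (f i).eigenspace μ :=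
      fun j u hu => ⟨hfU j u hu.1, mapsTo_genEigenspace_of_comm (hcomm i j) μ 1 hu.2⟩
    obtain ⟨v, hv, hv0, hvc⟩ := ih _ (hd ▸ Submodule.finrank_lt_finrank_of_lt
      (inf_le_left.lt_of_ne hlt)) _ hne hstable rfl
    exact ⟨v, hv.1, hv0, hvc⟩
  · push Not at hsplit
    obtain ⟨v, hv, hv0⟩ := Submodule.exists_mem_ne_zero_of_ne_bot hU
    refine ⟨v, hv, hv0, fun i => ?_⟩
    have : Nontrivial U := Submodule.nontrivial_iff_ne_bot.mpr hU
    obtain ⟨μ, hμ⟩ := exists_eigenvalue ((f i).restrict (hfU i))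
    obtain ⟨u, hu⟩ := hμ.exists_hasEigenvector
    have hmem : (u : V) ∈ U ⊓ (f i).eigenspace μ := by
      refine ⟨u.2, mem_eigenspace_iff.mpr ?_⟩
      simpa using congrArg Subtype.val (mem_eigenspace_iff.mp hu.1)
    have hUμ := hsplit i μ (fun h => hu.2 (by simpa [h] using hmem))
    rw [← hUμ] at hv
    exact ⟨μ, mem_eigenspace_iff.mp hv.2⟩

lemma exists_linearMap_eigenvalue_of_commute [FiniteDimensional ℂ V] {L : Type*}
    [AddCommGroup L] [Module ℂ L] (f : L →ₗ[ℂ] End ℂ V) (hcomm : ∀ x y, Commute (f x) (f y))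
    (U : Submodule ℂ V) (hU : U ≠ ⊥) (hfU : ∀ x, ∀ u ∈ U, f x u ∈ U) :
    ∃ v ∈ U, v ≠ 0 ∧ ∃ χ : L →ₗ[ℂ] ℂ, ∀ x, f x v = χ x • v := by
  obtain ⟨v, hv, hv0, hc⟩ := exists_mem_ne_zero_forall_eq_smul_of_commute f hcomm U hU hfU
  obtain ⟨φ, hφ⟩ := Projective.exists_dual_eq_one ℂ hv0
  refine ⟨v, hv, hv0, φ ∘ₗ f.flip v, fun x => ?_⟩
  obtain ⟨c, hcx⟩ := hc x
  simp [hcx, hφ]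

end Module.End

lemma exists_ne_zero_apply_eq_or_eq_neg {M : Type*} [AddCommGroup M] [Module ℂ M]
    {P : M →ₗ[ℂ] M} (hP : ∀ m, P (P m) = m) {W : Submodule ℂ M} (hW : ∀ w ∈ W, P w ∈ W)
    (hne : W ≠ ⊥) : ∃ v ∈ W, v ≠ 0 ∧ (P v = v ∨ P v = -v) := by
  obtain ⟨w, hw, hw0⟩ := Submodule.exists_mem_ne_zero_of_ne_bot hne
  by_cases hsum : P w + w = 0
  · exact ⟨w, hw, hw0, Or.inr (eq_neg_of_add_eq_zero_left hsum)⟩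
  · exact ⟨P w + w, add_mem (hW w hw) hw, hsum, Or.inl (by rw [map_add, hP, add_comm])⟩

lemma Matrix.IsDiag.commute_s12 {ι R : Type*} [Fintype ι] [DecidableEq ι] [CommSemiring R]
    {D E : Matrix ι ι R} (hD : D.IsDiag) (hE : E.IsDiag) : Commute D E := by
  rw [← hD.diagonal_diag, ← hE.diagonal_diag]
  exact commute_diagonal D.diag E.diag

lemma Matrix.eq_diagonal_diag_add_sum_single {ι R : Type*} [Fintype ι] [DecidableEq ι]
    [AddCommMonoid R] (X : Matrix ι ι R) :
    X = diagonal X.diag + ∑ i, ∑ j, if i = j then 0 else single i j (X i j) := by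
  ext k l
  simp only [Matrix.add_apply, Matrix.sum_apply, apply_ite (fun M : Matrix ι ι R => M k l),
    single_apply, diagonal_apply, diag_apply, Matrix.zero_apply]
  rw [Fintype.sum_eq_single k (fun x hx => Finset.sum_eq_zero fun c _ => by simp [hx]),
    Fintype.sum_eq_single l (fun c hc => by simp [hc])]
  by_cases h : k = l <;> simp [h]

lemma Matrix.diagonal_algebraMap_mul_single_sub {ι K B : Type*} [Fintype ι] [DecidableEq ι]
    [CommRing K] [Ring B] [Algebra K B] (d : ι → K) (i j : ι) (a : B) :
    diagonal (fun k => algebraMap K B (d k)) * single i j a -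
      single i j a * diagonal (fun k => algebraMap K B (d k)) = (d i - d j) • single i j a := by
  ext k l
  simp only [Matrix.sub_apply, diagonal_mul, mul_diagonal, Matrix.smul_apply, single_apply,
    Algebra.smul_def, map_sub]
  split_ifs with h
  · obtain ⟨rfl, rfl⟩ := h
    rw [sub_mul, Algebra.commutes (d j) a]
  · simp

lemma Fin.sum_half_sub_val_eq_zero (n : ℕ) :
    ∑ i : Fin (n + 1), ((n : ℂ) / 2 - ((i : ℕ) : ℂ)) = 0 := by
  have h := congrArg (Nat.cast : ℕ → ℂ) (Finset.sum_range_id_mul_two (n + 1))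
  rw [Fin.sum_univ_eq_sum_range (fun i => (n : ℂ) / 2 - i), Finset.sum_sub_distrib]
  push_cast at h
  simp only [Finset.sum_const, Finset.card_range, nsmul_eq_mul, Nat.cast_add, Nat.cast_one]
  linear_combination -h / 2

section

variable {n A}

def InNminus (p : QPair n A) : Prop :=
  ∀ i j : Fin (n + 1), i ≤ j → p.1 i j = 0 ∧ p.2 i j = 0

def evenPart (x : qA n A) : qA n A := ⟨(x.1.1, 0), x.2.1, trace_zero _ _⟩

def oddPart (x : qA n A) : qA n A := ⟨(0, x.1.2), trace_zero _ _, x.2.2⟩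

def diagPart (x : qA n A) : qA n A :=
  ⟨(diagonal x.1.1.diag, diagonal x.1.2.diag), (trace_diagonal _).trans x.2.1,
    (trace_diagonal _).trans x.2.2⟩

def rootVec {i j : Fin (n + 1)} (hij : i ≠ j) (a b : A) : qA n A :=
  ⟨(single i j a, single i j b), trace_single_eq_of_ne i j a hij,
    trace_single_eq_of_ne i j b hij⟩

lemma evenPart_add_oddPart (x : qA n A) : evenPart x + oddPart x = x :=
  Subtype.ext (Prod.ext (add_zero _) (zero_add _))

lemma evenPart_isEven (x : qA n A) : IsEvenElt n A (evenPart x) := rfl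

lemma oddPart_isOdd (x : qA n A) : IsOddElt n A (oddPart x) := rfl

lemma evenPart_inNminus {x : qA n A} (hx : InNminus x.1) : InNminus (evenPart x).1 :=
  fun i j hij => ⟨(hx i j hij).1, rfl⟩

lemma oddPart_inNminus {x : qA n A} (hx : InNminus x.1) : InNminus (oddPart x).1 :=
  fun i j hij => ⟨rfl, (hx i j hij).2⟩

lemma diagPart_inH (x : qA n A) : InH n A (diagPart x) :=
  ⟨isDiag_diagonal _, isDiag_diagonal _⟩

lemma diagPart_eq_zero {x : qA n A} (hx : ∀ i, x.1.1 i i = 0 ∧ x.1.2 i i = 0) :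
    diagPart x = 0 :=
  Subtype.ext (Prod.ext (diagonal_eq_zero.mpr (funext fun i => (hx i).1))
    (diagonal_eq_zero.mpr (funext fun i => (hx i).2)))

lemma rootVec_zero {i j : Fin (n + 1)} (hij : i ≠ j) : rootVec (A := A) hij 0 0 = 0 :=
  Subtype.ext (Prod.ext (single_zero i j) (single_zero i j))

lemma rootVec_inNminus {i j : Fin (n + 1)} (hji : j < i) (a b : A) :
    InNminus (rootVec hji.ne' a b : QPair n A) := fun k l hkl => by
  have : ¬(i = k ∧ j = l) := fun ⟨hik, hjl⟩ => (hik ▸ hjl ▸ hkl).not_gt hji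
  simp [rootVec, this]

lemma eq_diagPart_add_sum_rootVec (x : qA n A) :
    x = diagPart x + ∑ i, ∑ j, if h : i = j then 0 else rootVec h (x.1.1 i j) (x.1.2 i j) := by
  apply Subtype.ext
  simp only [Submodule.coe_add, Submodule.coe_sum, apply_dite Subtype.val, ZeroMemClass.coe_zero]
  refine Prod.ext ?_ ?_
  · simpa [Prod.fst_sum, apply_dite Prod.fst, apply_ite Prod.fst, diagPart, rootVec] using
      Matrix.eq_diagonal_diag_add_sum_single x.1.1
  · simpa [Prod.snd_sum, apply_dite Prod.snd, apply_ite Prod.snd, diagPart, rootVec] using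
      Matrix.eq_diagonal_diag_add_sum_single x.1.2

lemma inH_of_mem_h0A {p : QPair n A} (hp : p ∈ h0A n A) : InH n A p :=
  ⟨hp.2.1, hp.1 ▸ isDiag_zero⟩

lemma qbr_even_left (D : QMat n A) (q : QPair n A) :
    qbr n A (D, 0) q = (D * q.1 - q.1 * D, D * q.2 - q.2 * D) := by
  simp [qbr]

lemma qbr_eq_zero_of_mem_h0A {p q : QPair n A} (hp : p ∈ h0A n A) (hq : InH n A q) :
    qbr n A p q = 0 := by
  obtain ⟨p₁, p₂⟩ := p
  obtain ⟨rfl, hp₁, -⟩ := hp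
  rw [qbr_even_left, (hp₁.commute_s12 hq.1).eq, (hp₁.commute_s12 hq.2).eq, sub_self, sub_self]
  rfl

-- Its entries sum to zero, and it brackets the root vector at `(i, j)` to `j - i` times
-- itself; `j - i > 0` exactly on `𝔫⁺`.
def regPair : QPair n A :=
  (diagonal fun i => algebraMap ℂ A ((n : ℂ) / 2 - (i : ℕ)), 0)

lemma regPair_mem_h0A : regPair ∈ h0A n A :=
  ⟨rfl, isDiag_diagonal _, by
    rw [regPair, trace_diagonal, ← map_sum, Fin.sum_half_sub_val_eq_zero, map_zero]⟩

def regElt : qA n A := ⟨regPair, h0A_le_qA n A regPair_mem_h0A⟩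

lemma qbr_regElt_rootVec {i j : Fin (n + 1)} (hij : i ≠ j) (a b : A) :
    (⟨qbr n A (regElt : qA n A) (rootVec hij a b), qbr_mem n A _ _⟩ : qA n A) =
      (((j : ℕ) : ℂ) - (i : ℕ)) • rootVec hij a b := by
  have hd : ((n : ℂ) / 2 - (i : ℕ)) - ((n : ℂ) / 2 - (j : ℕ)) = (j : ℕ) - (i : ℕ) := by ring
  refine Subtype.ext ?_
  rw [Submodule.coe_smul]
  change qbr n A regPair _ = _
  rw [regPair, qbr_even_left]
  simp only [rootVec, Matrix.diagonal_algebraMap_mul_single_sub, hd, Prod.smul_mk]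

end

namespace QAct

variable {n A} {ρ : QAct n A M}

abbrev regOp (ρ : QAct n A M) : Module.End ℂ M := ρ.act regElt

def IsTopEigenvalue (ρ : QAct n A M) (lam : ℂ) : Prop :=
  ∀ μ : ℂ, lam.re < μ.re → ρ.regOp.maxGenEigenspace μ = ⊥

def lowerSpace (ρ : QAct n A M) (lam : ℂ) : Submodule ℂ M :=
  ⨆ (ν : ℂ) (_ : ν ≠ lam), ρ.regOp.maxGenEigenspace ν

/-- `U(𝔫⁻ ⊗ A) N`. -/
def nminusClosure (ρ : QAct n A M) (N : Submodule ℂ M) : Submodule ℂ M :=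
  sInf {S | N ≤ S ∧ ∀ f : qA n A, InNminus f.1 → ∀ y ∈ S, ρ.act f y ∈ S}

lemma le_nminusClosure (N : Submodule ℂ M) : N ≤ ρ.nminusClosure N :=
  le_sInf fun _ hS => hS.1

lemma act_mem_nminusClosure {N : Submodule ℂ M} {f : qA n A} (hf : InNminus f.1) {y : M}
    (hy : y ∈ ρ.nminusClosure N) : ρ.act f y ∈ ρ.nminusClosure N :=
  Submodule.mem_sInf.mpr fun S hS => hS.2 f hf y (Submodule.mem_sInf.mp hy S hS)

lemma nminusClosure_le {N S : Submodule ℂ M} (hNS : N ≤ S)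
    (hS : ∀ f : qA n A, InNminus f.1 → ∀ y ∈ S, ρ.act f y ∈ S) : ρ.nminusClosure N ≤ S :=
  sInf_le ⟨hNS, hS⟩

lemma mem_gen_self (v : M) : v ∈ ρ.gen n A v :=
  Submodule.mem_sInf.mpr fun _ hN => hN.1

lemma act_mem_gen {v m : M} (x : qA n A) (hm : m ∈ ρ.gen n A v) : ρ.act x m ∈ ρ.gen n A v :=
  Submodule.mem_sInf.mpr fun N hN => hN.2 x m (Submodule.mem_sInf.mp hm N hN)

lemma act_mem_of_diagPart_of_rootVec {S : Submodule ℂ M} {x : qA n A} {m : M}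
    (hd : ρ.act (diagPart x) m ∈ S)
    (hr : ∀ i j (hij : i ≠ j), ρ.act (rootVec hij (x.1.1 i j) (x.1.2 i j)) m ∈ S) :
    ρ.act x m ∈ S := by
  rw [eq_diagPart_add_sum_rootVec x, map_add, LinearMap.add_apply, map_sum, LinearMap.sum_apply]
  refine add_mem hd (sum_mem fun i _ => ?_)
  rw [map_sum, LinearMap.sum_apply]
  refine sum_mem fun j _ => ?_
  split_ifs with hij
  · simp
  · exact hr i j hij

lemma hwSpace_le_eigenspace {ψ : h0A n A →ₗ[ℂ] ℂ} {w : M} (hw : w ∈ hwSpace n A ρ ψ)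
    (hw0 : w ≠ 0) {lam : ℂ} (hwlam : w ∈ ρ.regOp.eigenspace lam) :
    hwSpace n A ρ ψ ≤ ρ.regOp.eigenspace lam := by
  have hψ : ψ ⟨regPair, regPair_mem_h0A⟩ = lam :=
    smul_left_injective ℂ hw0 ((hw _ regPair_mem_h0A).symm.trans
      (Module.End.mem_eigenspace_iff.mp hwlam))
  intro u hu
  rw [Module.End.mem_eigenspace_iff, ← hψ]
  exact hu _ regPair_mem_h0A

namespace IsRep

lemma P_P (hrep : ρ.IsRep n A) (m : M) : ρ.P (ρ.P m) = m :=
  LinearMap.congr_fun hrep.1 m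

lemma P_act (hrep : ρ.IsRep n A) (x : qA n A) (m : M) :
    ρ.P (ρ.act x m) = ρ.act (evenPart x) (ρ.P m) - ρ.act (oddPart x) (ρ.P m) := by
  have heven := LinearMap.congr_fun (hrep.2.1 _ (evenPart_isEven x)) m
  have hodd := LinearMap.congr_fun (hrep.2.2.1 _ (oddPart_isOdd x)) m
  conv_lhs => rw [← evenPart_add_oddPart x]
  simp only [LinearMap.comp_apply, LinearMap.neg_apply] at heven hodd
  rw [map_add, LinearMap.add_apply, map_add, heven, hodd, sub_eq_add_neg]

lemma commute_act_of_mem_h0A (hrep : ρ.IsRep n A) {x y : qA n A} (hx : x.1 ∈ h0A n A)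
    (hy : InH n A y.1) : Commute (ρ.act x) (ρ.act y) := by
  have h := hrep.2.2.2.1 x y (Or.inl hx.1)
  rw [show (⟨qbr n A x y, qbr_mem n A _ _⟩ : qA n A) = 0 from
    Subtype.ext (qbr_eq_zero_of_mem_h0A hx hy), map_zero, eq_comm, sub_eq_zero] at h
  exact h

lemma act_act_eq_smul_add (hrep : ρ.IsRep n A) {x y : qA n A}
    (hx : IsEvenElt n A x ∨ IsOddElt n A x) (hy : IsEvenElt n A y ∨ IsOddElt n A y) (m : M) :
    ∃ s : ℂ, ρ.act x (ρ.act y m) =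
      s • ρ.act y (ρ.act x m) + ρ.act ⟨qbr n A x y, qbr_mem n A _ _⟩ m := by
  by_cases hev : IsEvenElt n A x ∨ IsEvenElt n A y
  · refine ⟨1, ?_⟩
    rw [hrep.2.2.2.1 x y hev, one_smul, LinearMap.sub_apply]
    simp only [LinearMap.comp_apply]
    abel
  · refine ⟨-1, ?_⟩
    rw [hrep.2.2.2.2 x y (hx.resolve_left (hev ∘ Or.inl)) (hy.resolve_left (hev ∘ Or.inr)),
      neg_one_smul, LinearMap.add_apply]
    simp only [LinearMap.comp_apply]
    abel

lemma act_act_mem_of_homogeneous (hrep : ρ.IsRep n A) {S : Submodule ℂ M} {x f : qA n A}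
    (hx : IsEvenElt n A x ∨ IsOddElt n A x) (hf : IsEvenElt n A f ∨ IsOddElt n A f)
    (hfS : ∀ m ∈ S, ρ.act f m ∈ S) {y : M} (hy : ∀ x, ρ.act x y ∈ S) :
    ρ.act x (ρ.act f y) ∈ S := by
  obtain ⟨s, hs⟩ := hrep.act_act_eq_smul_add hx hf y
  rw [hs]
  exact add_mem (S.smul_mem s (hfS _ (hy x))) (hy _)

lemma act_act_mem (hrep : ρ.IsRep n A) {S : Submodule ℂ M} {f : qA n A}
    (hf : ∀ m ∈ S, ρ.act (evenPart f) m ∈ S ∧ ρ.act (oddPart f) m ∈ S) {y : M}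
    (hy : ∀ x, ρ.act x y ∈ S) (x : qA n A) : ρ.act x (ρ.act f y) ∈ S := by
  have he : ∀ z : qA n A, IsEvenElt n A (evenPart z) ∨ IsOddElt n A (evenPart z) :=
    fun z => Or.inl (evenPart_isEven z)
  have ho : ∀ z : qA n A, IsEvenElt n A (oddPart z) ∨ IsOddElt n A (oddPart z) :=
    fun z => Or.inr (oddPart_isOdd z)
  have hfe : ∀ m ∈ S, ρ.act (evenPart f) m ∈ S := fun m hm => (hf m hm).1
  have hfo : ∀ m ∈ S, ρ.act (oddPart f) m ∈ S := fun m hm => (hf m hm).2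
  rw [← evenPart_add_oddPart x, ← evenPart_add_oddPart f]
  simp only [map_add, LinearMap.add_apply]
  exact add_mem
    (add_mem (hrep.act_act_mem_of_homogeneous (he x) (he f) hfe hy)
      (hrep.act_act_mem_of_homogeneous (ho x) (he f) hfe hy))
    (add_mem (hrep.act_act_mem_of_homogeneous (he x) (ho f) hfo hy)
      (hrep.act_act_mem_of_homogeneous (ho x) (ho f) hfo hy))

lemma act_rootVec_mem_maxGenEigenspace (hrep : ρ.IsRep n A) {i j : Fin (n + 1)} (hij : i ≠ j)
    (a b : A) {μ : ℂ} {m : M} (hm : m ∈ ρ.regOp.maxGenEigenspace μ) :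
    ρ.act (rootVec hij a b) m ∈ ρ.regOp.maxGenEigenspace (μ + ((j : ℕ) - (i : ℕ))) := by
  refine Module.End.apply_mem_maxGenEigenspace_add ?_ hm
  have h := hrep.2.2.2.1 regElt (rootVec hij a b) (Or.inl rfl)
  rw [qbr_regElt_rootVec, map_smul] at h
  rw [Module.End.mul_eq_comp, Module.End.mul_eq_comp, h]

lemma mem_hwSpace_act (hrep : ρ.IsRep n A) (ψ : h0A n A →ₗ[ℂ] ℂ) {x : qA n A}
    (hx : InH n A x) {w : M} (hw : w ∈ hwSpace n A ρ ψ) : ρ.act x w ∈ hwSpace n A ρ ψ :=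
  fun p hp => by
    rw [← Module.End.mul_apply, (hrep.commute_act_of_mem_h0A hp hx).eq, Module.End.mul_apply,
      hw p hp, map_smul]

lemma mem_hwSpace_P (hrep : ρ.IsRep n A) (ψ : h0A n A →ₗ[ℂ] ℂ) {w : M}
    (hw : w ∈ hwSpace n A ρ ψ) : ρ.P w ∈ hwSpace n A ρ ψ :=
  fun p hp => by
    rw [← LinearMap.comp_apply, ← hrep.2.1 ⟨p, h0A_le_qA n A hp⟩ hp.1, LinearMap.comp_apply,
      hw p hp, map_smul]

lemma gen_eq_top (hrep : ρ.IsRep n A) (hirr : ρ.Irred n A) {v : M} (hv0 : v ≠ 0)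
    (hPv : ρ.P v = v ∨ ρ.P v = -v) : ρ.gen n A v = ⊤ := by
  have hP : ρ.gen n A v ≤ (ρ.gen n A v).comap ρ.P := by
    refine sInf_le ⟨?_, fun x m hm => ?_⟩
    · rcases hPv with h | h <;> simp [h, mem_gen_self]
    · rw [Submodule.mem_comap, hrep.P_act]
      exact sub_mem (act_mem_gen _ hm) (act_mem_gen _ hm)
  refine (hirr.2 _ ⟨fun x m hm => act_mem_gen x hm, fun m hm => hP hm⟩).resolve_left fun h => ?_
  exact hv0 ((Submodule.mem_bot ℂ).mp (h ▸ mem_gen_self v))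

variable {lam : ℂ}

lemma act_rootVec_eq_zero (hrep : ρ.IsRep n A)
    (hlam : ρ.IsTopEigenvalue lam) {i j : Fin (n + 1)}
    (hij : i < j) (a b : A) {m : M} (hm : m ∈ ρ.regOp.maxGenEigenspace lam) :
    ρ.act (rootVec hij.ne a b) m = 0 := by
  have h := hrep.act_rootVec_mem_maxGenEigenspace hij.ne a b hm
  rwa [hlam _ (by simpa using hij), Submodule.mem_bot] at h

lemma act_eq_zero_of_inNplus (hrep : ρ.IsRep n A)
    (hlam : ρ.IsTopEigenvalue lam) {x : qA n A}
    (hx : InNplus n A x) {m : M} (hm : m ∈ ρ.regOp.maxGenEigenspace lam) : ρ.act x m = 0 := by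
  rw [← Submodule.mem_bot ℂ]
  refine act_mem_of_diagPart_of_rootVec ?_ fun i j hij => ?_
  · simp [diagPart_eq_zero fun i => hx i i le_rfl]
  rcases hij.lt_or_gt with hij | hji
  · simp [hrep.act_rootVec_eq_zero hlam hij _ _ hm]
  · simp [hx i j hji.le, rootVec_zero]

lemma act_mem_lowerSpace_of_inNminus [FiniteDimensional ℂ M] (hrep : ρ.IsRep n A)
    (hlam : ρ.IsTopEigenvalue lam) {x : qA n A}
    (hx : InNminus x.1) (m : M) : ρ.act x m ∈ ρ.lowerSpace lam := by
  suffices h : ⊤ ≤ (ρ.lowerSpace lam).comap (ρ.act x) from h Submodule.mem_top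
  rw [← ρ.regOp.iSup_maxGenEigenspace_eq_top]
  refine iSup_le fun μ m hm => Submodule.mem_comap.mpr <|
    act_mem_of_diagPart_of_rootVec ?_ fun i j hij => ?_
  · simp [diagPart_eq_zero fun i => hx i i le_rfl]
  rcases hij.lt_or_gt with hij | hji
  · simp [hx i j hij.le, rootVec_zero]
  have hshift := hrep.act_rootVec_mem_maxGenEigenspace hij (x.1.1 i j) (x.1.2 i j) hm
  by_cases hμ : μ + ((j : ℕ) - (i : ℕ)) = lam
  · -- the source eigenvalue `μ = lam + (i - j)` lies above `lam`, so `m = 0`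
    rw [hlam μ (by rw [← hμ]; simpa using hji), Submodule.mem_bot] at hm
    simp [hm]
  · exact Submodule.mem_iSup_of_mem _ (Submodule.mem_iSup_of_mem hμ hshift)

lemma nminusClosure_invt (hrep : ρ.IsRep n A)
    (hlam : ρ.IsTopEigenvalue lam) {N : Submodule ℂ M}
    (hN : N ≤ ρ.regOp.maxGenEigenspace lam) (hNH : ∀ x : qA n A, InH n A x → ∀ w ∈ N, ρ.act x w ∈ N)
    (hNP : ∀ w ∈ N, ρ.P w ∈ N) : ρ.Invt n A (ρ.nminusClosure N) := by
  -- `Z` contains `N` (as `𝔫⁺ ⊗ A` kills `N`) and is `𝔫⁻ ⊗ A`-stable by the super-commutator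
  -- rule, so it contains `Y`.
  set Y := ρ.nminusClosure N
  let Z : Submodule ℂ M := Y ⊓ (⨅ x : qA n A, Y.comap (ρ.act x)) ⊓ Y.comap ρ.P
  have hmemZ : ∀ y, y ∈ Z ↔ (y ∈ Y ∧ ∀ x, ρ.act x y ∈ Y) ∧ ρ.P y ∈ Y := fun y => by
    simp [Z]
  have hYZ : Y ≤ Z := by
    refine nminusClosure_le (fun y hy => (hmemZ y).mpr ⟨⟨le_nminusClosure N hy, fun x => ?_⟩,
      le_nminusClosure N (hNP y hy)⟩) fun f hf y hy => ?_
    · refine act_mem_of_diagPart_of_rootVec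
        (le_nminusClosure N (hNH _ (diagPart_inH x) y hy)) fun i j hij => ?_
      rcases hij.lt_or_gt with hij | hji
      · simp [hrep.act_rootVec_eq_zero hlam hij _ _ (hN hy)]
      · exact act_mem_nminusClosure (rootVec_inNminus hji _ _) (le_nminusClosure N hy)
    · obtain ⟨⟨hyY, hyx⟩, hyP⟩ := (hmemZ y).mp hy
      have hfY : ∀ m ∈ Y, ρ.act (evenPart f) m ∈ Y ∧ ρ.act (oddPart f) m ∈ Y := fun m hm =>
        ⟨act_mem_nminusClosure (evenPart_inNminus hf) hm,
          act_mem_nminusClosure (oddPart_inNminus hf) hm⟩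
      refine (hmemZ _).mpr ⟨⟨act_mem_nminusClosure hf hyY, hrep.act_act_mem hfY hyx⟩, ?_⟩
      rw [hrep.P_act]
      exact sub_mem (hfY _ hyP).1 (hfY _ hyP).2
  exact ⟨fun x y hy => ((hmemZ y).mp (hYZ hy)).1.2 x, fun y hy => ((hmemZ y).mp (hYZ hy)).2⟩

lemma sup_lowerSpace_eq_top [FiniteDimensional ℂ M] (hrep : ρ.IsRep n A) (hirr : ρ.Irred n A)
    (hlam : ρ.IsTopEigenvalue lam) {N : Submodule ℂ M}
    (hN0 : N ≠ ⊥) (hN : N ≤ ρ.regOp.maxGenEigenspace lam)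
    (hNH : ∀ x : qA n A, InH n A x → ∀ w ∈ N, ρ.act x w ∈ N) (hNP : ∀ w ∈ N, ρ.P w ∈ N) :
    N ⊔ ρ.lowerSpace lam = ⊤ := by
  have hY : ρ.nminusClosure N = ⊤ :=
    (hirr.2 _ (hrep.nminusClosure_invt hlam hN hNH hNP)).resolve_left fun h =>
      hN0 (le_bot_iff.mp (h ▸ le_nminusClosure N))
  rw [eq_top_iff, ← hY]
  exact nminusClosure_le le_sup_left fun f hf y _ =>
    Submodule.mem_sup_right (hrep.act_mem_lowerSpace_of_inNminus hlam hf y)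

end IsRep

end QAct

theorem irred_fd_is_highest_weight
    [FiniteDimensional ℂ M] (ρ : QAct n A M)
    (hrep : QAct.IsRep n A ρ) (hirr : QAct.Irred n A ρ) :
    ∃ (ψ : ↥(h0A n A) →ₗ[ℂ] ℂ) (v : M),
      QAct.IsHWVector n A ρ ψ v ∧
      (∀ x : ↥(qA n A), InH n A ↑x → ∀ w ∈ hwSpace n A ρ ψ, ρ.act x w ∈ hwSpace n A ρ ψ) ∧
      (∀ w ∈ hwSpace n A ρ ψ, ρ.P w ∈ hwSpace n A ρ ψ) ∧
      (∀ N : Submodule ℂ M, N ≤ hwSpace n A ρ ψ →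
        (∀ x : ↥(qA n A), InH n A ↑x → ∀ w ∈ N, ρ.act x w ∈ N) →
        (∀ w ∈ N, ρ.P w ∈ N) → N = ⊥ ∨ N = hwSpace n A ρ ψ) := by
  have := hirr.1
  obtain ⟨lam, hlam, htop⟩ := ρ.regOp.exists_hasEigenvalue_maxGenEigenspace_eq_bot_of_re_lt
  obtain ⟨w, hwlam, hw0, ψ, hψ⟩ := Module.End.exists_linearMap_eigenvalue_of_commute
    (ρ.act ∘ₗ Submodule.inclusion (h0A_le_qA n A))
    (fun x y => hrep.commute_act_of_mem_h0A x.2 (inH_of_mem_h0A y.2)) _ hlam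
    (fun x => Module.End.mapsTo_genEigenspace_of_comm
      (hrep.commute_act_of_mem_h0A regPair_mem_h0A (inH_of_mem_h0A x.2)) lam 1)
  have hw : w ∈ hwSpace n A ρ ψ := fun p hp => hψ ⟨p, hp⟩
  have hW : hwSpace n A ρ ψ ≤ ρ.regOp.maxGenEigenspace lam :=
    (QAct.hwSpace_le_eigenspace hw hw0 hwlam).trans Module.End.eigenspace_le_maxGenEigenspace
  obtain ⟨v, hv, hv0, hPv⟩ := exists_ne_zero_apply_eq_or_eq_neg hrep.P_P
    (fun _ => hrep.mem_hwSpace_P ψ) (Submodule.ne_bot_iff _ |>.mpr ⟨w, hw, hw0⟩)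
  refine ⟨ψ, v, ⟨hv0, hrep.gen_eq_top hirr hv0 hPv,
    fun x hx => hrep.act_eq_zero_of_inNplus htop hx (hW hv), hv⟩,
    fun x hx _ => hrep.mem_hwSpace_act ψ hx, fun _ => hrep.mem_hwSpace_P ψ,
    fun N hNW hNH hNP => or_iff_not_imp_left.mpr fun hN0 => ?_⟩
  have hdisj : Disjoint (hwSpace n A ρ ψ) (ρ.lowerSpace lam) :=
    (ρ.regOp.independent_maxGenEigenspace lam).mono_left hW
  refine eq_of_le_of_inf_le_of_sup_le (z := ρ.lowerSpace lam) hNW (hdisj.eq_bot ▸ bot_le) ?_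
  rw [hrep.sup_lowerSpace_eq_top hirr htop hN0 (hNW.trans hW) hNH hNP]
  exact le_top
end
end
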